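/- The map T ↦ σ_e^T sends the compatible environments onto the environment strategy set of the knowledge-based game arena G: for every compatible environment T ∈ 𝕋, σ_e^T is a well-defined positional environment strategy belonging to 𝔖_e; and conversely, for every σ_e ∈ 𝔖_e there exists a compatible environment T ∈ 𝕋 such that σ_e(v_e) = σ_e^T(v_e) for every environment vertex v_e of G. -/

import Mathlib

namespace RegretLTL

/-- A deterministic finite automaton over alphabet `2^AP`. -/
structure DFAut (Q AP : Type) where
  q0 : Q
  f : Q → Finset AP → Q
  QF : Set Q

/-- A partially-known weighted transition system. -/
structure PKWTS (X AP : Type) where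
  x0 : X
  Δ : X → Finset (Finset X)
  Δ_nonempty : ∀ x, (Δ x).Nonempty
  w : X → X → ℝ
  w_nonneg : ∀ x y, 0 ≤ w x y
  L : X → Finset AP
  x0_known : (Δ x0).card = 1

variable {X Q AP : Type} [DecidableEq X] [Fintype X] [Fintype Q] [Fintype AP]
  [Inhabited X] [Inhabited Q]

/-- The pattern recorded for `x` in a knowledge-set (junk value `∅` if absent). -/
def lookupO (K : List (X × Finset X)) (x : X) : Finset X :=
  ((K.find? (fun k => decide (k.1 = x))).map Prod.snd).getD ∅

/-- `x` has been explored in the knowledge-set `K`, i.e. `x ∈ X(K)`. -/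
def Explored (K : List (X × Finset X)) (x : X) : Prop := ∃ o, (x, o) ∈ K

/-- Knowledge-set update. -/
def kupdate (K : List (X × Finset X)) (κ : X × Finset X) : List (X × Finset X) :=
  if K.any (fun k => decide (k.1 = κ.1)) then K else K ++ [κ]

variable (M : PKWTS X AP) (D : DFAut Q AP) (K0 : List (X × Finset X))

/-- `K0` is the initial knowledge-set: it lists (in some fixed order) each known
state together with its unique successor pattern. -/
def IsInitK : Prop :=
  (K0.map Prod.fst).Nodup ∧ (∀ p ∈ K0, M.Δ p.1 = {p.2}) ∧
    ∀ x : X, (M.Δ x).card = 1 → ∃ o, (x, o) ∈ K0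

/-- A compatible environment `T ∈ 𝕋`, given by its transition function. -/
def CompatEnv := { δ : X → Finset X // ∀ x, δ x ∈ M.Δ x }

/-- A finite path of the environment with transition function `δ`, starting at `x0`. -/
def IsEnvPath (δ : X → Finset X) (ρ : List X) : Prop :=
  ρ ≠ [] ∧ ρ.head? = some M.x0 ∧ ρ.Chain' (fun a b => b ∈ δ a)

/-- Cost of a finite path. -/
def costP (ρ : List X) : ℝ := (List.zipWith M.w ρ ρ.tail).sum

/-- Run of the DFA on the labels of a sequence of states. -/
def frun (q : Q) (xs : List X) : Q := xs.foldl (fun q x => D.f q (M.L x)) q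

/-- The finite path `ρ = x0 x1 ⋯ xn` accomplishes the task:
`f(q0, L(x0)⋯L(x_{n-1})) ∈ QF`. -/
def Accomplishes (ρ : List X) : Prop :=
  ρ ≠ [] ∧ frun M D D.q0 ρ.dropLast ∈ D.QF

/-- A history of the PK-WTS. -/
def IsHistory (h : List (X × Finset X)) : Prop :=
  h ≠ [] ∧ (h.map Prod.fst).head? = some M.x0 ∧
  (∀ p ∈ h, p.2 ∈ M.Δ p.1) ∧
  h.Chain' (fun p p' => p'.1 ∈ p.2) ∧
  ∀ p ∈ h, ∀ p' ∈ h, p.1 = p'.1 → p.2 = p'.2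

/-- Validity of a strategy for the PK-WTS: it moves to a successor in the last
observed pattern, or stops. -/
def XiValid (ξ : List (X × Finset X) → Option X) : Prop :=
  ∀ h p x, IsHistory M h → h.getLast? = some p → ξ h = some x → x ∈ p.2

/-- The history induced from a path in a fixed environment. -/
def histOf (δ : X → Finset X) (ρ : List X) : List (X × Finset X) :=
  ρ.map (fun x => (x, δ x))

/-- `ρ` is the outcome path `ρ^T_ξ` of strategy `ξ` in environment `δ`. -/
def IsOutcomePath (ξ : List (X × Finset X) → Option X) (δ : X → Finset X)
    (ρ : List X) : Prop :=
  IsEnvPath M δ ρ ∧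
  (∀ i (h : i + 1 < ρ.length),
    ξ (histOf δ (ρ.take (i+1))) = some (ρ[i+1]'h)) ∧
  ξ (histOf δ ρ) = none

open Classical in
/-- The outcome path `ρ^T_ξ` (junk `[]` if it does not exist). -/
noncomputable def outcomePath (ξ : List (X × Finset X) → Option X)
    (T : CompatEnv M) : List X :=
  if h : ∃ ρ, IsOutcomePath M ξ T.1 ρ then h.choose else []

/-- `Stra_A(𝕋)`: strategies whose outcome path exists and accomplishes the task in
every compatible environment. -/
def StraA : Set (List (X × Finset X) → Option X) :=
  { ξ | XiValid M ξ ∧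
      ∀ T : CompatEnv M, ∃ ρ, IsOutcomePath M ξ T.1 ρ ∧ Accomplishes M D ρ }

/-- The regret of a strategy `ξ` in the partially-known environment `𝕋`. -/
noncomputable def regT (ξ : List (X × Finset X) → Option X) : ℝ :=
  sSup { r | ∃ T : CompatEnv M,
    costP M (outcomePath M ξ T) -
      sInf { c | ∃ ξ' ∈ StraA M D, costP M (outcomePath M ξ' T) = c } = r }

/-- Vertices of the knowledge-based game arena. -/
inductive Vtx (X Q : Type) where
  | ag (x : X) (q : Q) (K : List (X × Finset X))
  | env (x : X) (q : Q) (K : List (X × Finset X)) (xh : X)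

instance : Inhabited (Vtx X Q) := ⟨.ag default default []⟩

def IsAgV : Vtx X Q → Prop
  | .ag _ _ _ => True
  | _ => False

def IsEnvV : Vtx X Q → Prop
  | .env _ _ _ _ => True
  | _ => False

/-- Knowledge-set component of a vertex. -/
def Kof : Vtx X Q → List (X × Finset X)
  | .ag _ _ K => K
  | .env _ _ K _ => K

/-- The fourth (target-state) component of an environment vertex. -/
def tgtOf : Vtx X Q → Option X
  | .env _ _ _ xh => some xh
  | _ => none

/-- Edges of the knowledge-based game arena. -/
def Edge : Vtx X Q → Vtx X Q → Prop
  | .ag x q K, .env x' q' K' xh =>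
      x' = x ∧ q' = q ∧ K' = K ∧ Explored K x ∧ xh ∈ lookupO K x
  | .env xe qe Ke xh, .ag xa qa Ka =>
      xa = xh ∧ qa = D.f qe (M.L xe) ∧ ∃ o ∈ M.Δ xa, Ka = kupdate Ke (xa, o)
  | _, _ => False

/-- Initial vertex of the arena. -/
def v0 : Vtx X Q := .ag M.x0 D.q0 K0

/-- Weight function of the arena. -/
def wG : Vtx X Q → Vtx X Q → ℝ
  | .env xe _ _ _, .ag xa _ _ => M.w xe xa
  | _, _ => 0

/-- A play: a finite directed path in the arena starting at `v0`. -/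
def IsPlay (π : List (Vtx X Q)) : Prop :=
  π.head? = some (v0 M D K0) ∧ π.Chain' (Edge M D)

/-- Cost of a play. -/
def costG (π : List (Vtx X Q)) : ℝ := (List.zipWith (wG M) π π.tail).sum

/-- Accepting (final) vertices `V_F`. -/
def InVF : Vtx X Q → Prop
  | Vtx.ag _ q _ => q ∈ D.QF
  | _ => False

/-- Validity of an agent strategy: along plays ending at an agent vertex, it
either stops or moves along an edge of the arena. -/
def AValid (σa : List (Vtx X Q) → Option (Vtx X Q)) : Prop :=
  ∀ π u v, IsPlay M D K0 π → π.getLast? = some u → IsAgV u → σa π = some v →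
    Edge M D u v

/-- Validity of a (positional) environment strategy: it moves along edges of the
arena, and it reveals the same successor pattern whenever the same unexplored
state is entered. This defines membership in `𝔖_e`. -/
def EValid (σe : Vtx X Q → Vtx X Q) : Prop :=
  (∀ v, IsEnvV v → Edge M D v (σe v)) ∧
  (∀ (x : X) (q : Q) (K : List (X × Finset X)) (x' : X) (q' : Q)
      (K' : List (X × Finset X)) (xh : X),
    ¬ Explored K xh → ¬ Explored K' xh →
    lookupO (Kof (σe (.env x q K xh))) xh = lookupO (Kof (σe (.env x' q' K' xh))) xh)

/-- The set `𝔖_e` of environment strategies. -/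
def SE : Set (Vtx X Q → Vtx X Q) := { σe | EValid M D σe }

/-- `π` is the outcome play `π_{σa,σe}`. -/
def IsOutcome (σa : List (Vtx X Q) → Option (Vtx X Q)) (σe : Vtx X Q → Vtx X Q)
    (π : List (Vtx X Q)) : Prop :=
  IsPlay M D K0 π ∧
  (∀ i (h : i + 1 < π.length),
    (IsAgV (π[i]'(Nat.lt_of_succ_lt h)) → σa (π.take (i+1)) = some (π[i+1]'h)) ∧
    (IsEnvV (π[i]'(Nat.lt_of_succ_lt h)) → σe (π[i]'(Nat.lt_of_succ_lt h)) = π[i+1]'h)) ∧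
  IsAgV π.getLast! ∧ σa π = none

open Classical in
/-- The outcome play `π_{σa,σe}` (junk `[]` if it does not exist). -/
noncomputable def outcome (σa : List (Vtx X Q) → Option (Vtx X Q))
    (σe : Vtx X Q → Vtx X Q) : List (Vtx X Q) :=
  if h : ∃ π, IsOutcome M D K0 σa σe π then h.choose else []

/-- The set `𝔖_a` of winning agent strategies. -/
def SA : Set (List (Vtx X Q) → Option (Vtx X Q)) :=
  { σa | AValid M D K0 σa ∧
      ∀ σe ∈ SE M D, ∃ π, IsOutcome M D K0 σa σe π ∧ InVF D π.getLast! }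

/-- `min_{σa' ∈ 𝔖_a} cost_G(π_{σa',σe})`. -/
noncomputable def bestCost (σe : Vtx X Q → Vtx X Q) : ℝ :=
  sInf { c | ∃ σa ∈ SA M D K0, costG M (outcome M D K0 σa σe) = c }

/-- The regret `reg_G^{σe}(σa)` of `σa` against `σe`. -/
noncomputable def regAgainst (σa : List (Vtx X Q) → Option (Vtx X Q))
    (σe : Vtx X Q → Vtx X Q) : ℝ :=
  costG M (outcome M D K0 σa σe) - bestCost M D K0 σe

/-- The regret `reg_G(σa)`. -/
noncomputable def regG (σa : List (Vtx X Q) → Option (Vtx X Q)) : ℝ :=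
  sSup { r | ∃ σe ∈ SE M D, regAgainst M D K0 σa σe = r }

/-- Positional agent strategies. -/
def PositionalA (σa : List (Vtx X Q) → Option (Vtx X Q)) : Prop :=
  ∀ π π' : List (Vtx X Q), π.getLast? = π'.getLast? → σa π = σa π'

/-- `T ∈ 𝕋_K`. -/
def InTK (K : List (X × Finset X)) (T : CompatEnv M) : Prop :=
  ∀ p ∈ K, T.1 p.1 = p.2

/-- Best response `br(K)`. -/
noncomputable def br (K : List (X × Finset X)) : ℝ :=
  sInf { c | ∃ T : CompatEnv M, InTK M K T ∧
    ∃ ρ, IsEnvPath M T.1 ρ ∧ Accomplishes M D ρ ∧ costP M ρ = c }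

/-- Minimum cost of a play from `v0` to `v`. -/
noncomputable def SPcost (v : Vtx X Q) : ℝ :=
  sInf { c | ∃ π, IsPlay M D K0 π ∧ π.getLast? = some v ∧ costG M π = c }

/-- The edge `(u,v)` occurs on the play `π`. -/
def EdgeOn (u v : Vtx X Q) (π : List (Vtx X Q)) : Prop := (u, v) ∈ π.zip π.tail

/-- `(u,v) ∈ E_SP`: `(u,v)` lies on a minimum-cost play from `v0` to `V_F`. -/
def inESP (u v : Vtx X Q) : Prop :=
  ∃ π vf, IsPlay M D K0 π ∧ π.getLast? = some vf ∧ InVF D vf ∧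
    costG M π = SPcost M D K0 vf ∧ EdgeOn u v π

open Classical in
/-- The modified weight function `μ`, with values in `EReal`. -/
noncomputable def mu (u v : Vtx X Q) : EReal :=
  if IsEnvV u ∧ IsAgV v then
    (if inESP M D K0 u v then
      (if InVF D v then (((SPcost M D K0 v - br M D (Kof v) : ℝ)) : EReal) else 0)
     else ⊤)
  else 0

/-- Cost of a play with respect to `μ`. -/
noncomputable def costMu (π : List (Vtx X Q)) : EReal :=
  (List.zipWith (mu M D K0) π π.tail).sum

open Classical in
/-- `Val^μ(σa)`. -/
noncomputable def Valmu (σa : List (Vtx X Q) → Option (Vtx X Q)) : EReal :=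
  if AValid M D K0 σa ∧
     (∀ σe ∈ SE M D, ∃ π, IsOutcome M D K0 σa σe π ∧ InVF D π.getLast!)
  then sSup { c : EReal | ∃ σe ∈ SE M D, costMu M D K0 (outcome M D K0 σa σe) = c }
  else ⊤

/-- The environment strategy `σ_e^T` induced by a compatible environment `T`. -/
def envOf (T : CompatEnv M) : Vtx X Q → Vtx X Q
  | .env x q K xh => .ag xh (D.f q (M.L x)) (kupdate K (xh, T.1 xh))
  | v => v

/-- Best responses are achievable: for every compatible `T`, the best cost against
`σ_e^T` in the arena equals the minimum cost of a path of `T` accomplishing the task. -/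
def BRAchievable : Prop :=
  ∀ T : CompatEnv M,
    bestCost M D K0 (envOf M D T) =
      sInf { c | ∃ ρ, IsEnvPath M T.1 ρ ∧ Accomplishes M D ρ ∧ costP M ρ = c }

/-- The sequence of `X`-components of the agent vertices of a play. -/
def agentStates (π : List (Vtx X Q)) : List X :=
  π.filterMap (fun v => match v with | .ag x _ _ => some x | _ => none)

/-- The history induced by a complete play. -/
def inducedHist (π : List (Vtx X Q)) : List (X × Finset X) :=
  π.filterMap (fun v => match v with | .ag x _ K => some (x, lookupO K x) | _ => none)

/-- A branching environment vertex: at least two outgoing edges. -/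
def Branching (v : Vtx X Q) : Prop :=
  IsEnvV v ∧ ∃ u1 u2, u1 ≠ u2 ∧ Edge M D v u1 ∧ Edge M D v u2

open Classical in
/-- The sublist of branching environment vertices of a play, in order. -/
noncomputable def branchList (π : List (Vtx X Q)) : List (Vtx X Q) :=
  π.filter (fun v => decide (Branching M D v))



end RegretLTL

/-!
`σ_e^T` moves along arena edges and, on entering an unexplored state `x̂`, always reveals
`δ_T(x̂)`, so it lies in `𝔖_e`. Conversely, every arena edge out of `(x, q, K, x̂)` is determined
by the pattern `o ∈ Δ(x̂)` it reveals, and that pattern is ignored by `update` once `x̂ ∈ X(K)`.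
For `σ_e ∈ 𝔖_e` the pattern revealed on entering an unexplored `x̂` does not depend on the
vertex, so reading it off at `(x̂, q, ∅, x̂)` defines a compatible `δ_T` with `σ_e = σ_e^T`.
-/

namespace RegretLTL

section KnowledgeSet

variable {X : Type} {K : List (X × Finset X)} {x : X} {o : Finset X}

theorem not_explored_nil : ¬ Explored ([] : List (X × Finset X)) x := by
  simp [Explored]

variable [DecidableEq X]

theorem explored_iff_any : Explored K x ↔ K.any (fun k => decide (k.1 = x)) = true := by
  simp [Explored]

theorem kupdate_of_explored (h : Explored K x) : kupdate K (x, o) = K :=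
  if_pos (explored_iff_any.mp h)

theorem kupdate_of_not_explored (h : ¬ Explored K x) : kupdate K (x, o) = K ++ [(x, o)] :=
  if_neg (explored_iff_any.not.mp h)

theorem lookupO_kupdate_of_not_explored (h : ¬ Explored K x) :
    lookupO (kupdate K (x, o)) x = o := by
  have hfind : K.find? (fun k => decide (k.1 = x)) = none := by
    simp only [List.find?_eq_none, decide_eq_true_eq]
    rintro ⟨y, p⟩ hyp rfl
    exact h ⟨p, hyp⟩
  simp [lookupO, kupdate_of_not_explored h, List.find?_append, hfind]

end KnowledgeSet

section Arena

variable {X Q AP : Type} [DecidableEq X] (M : PKWTS X AP) (D : DFAut Q AP)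

theorem edge_env_iff {xe : X} {qe : Q} {Ke : List (X × Finset X)} {xh : X} {v : Vtx X Q} :
    Edge M D (.env xe qe Ke xh) v ↔
      ∃ o ∈ M.Δ xh, v = .ag xh (D.f qe (M.L xe)) (kupdate Ke (xh, o)) := by
  cases v with
  | env => simp [Edge]
  | ag xa qa Ka =>
    constructor
    · rintro ⟨rfl, rfl, o, ho, rfl⟩
      exact ⟨o, ho, rfl⟩
    · rintro ⟨o, ho, ⟨⟩⟩
      exact ⟨rfl, rfl, o, ho, rfl⟩

theorem envOf_mem_SE (T : CompatEnv M) : envOf M D T ∈ SE M D := by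
  refine ⟨?_, fun x q K x' q' K' xh hK hK' => ?_⟩
  · rintro (_ | ⟨x, q, K, xh⟩) hv
    · exact hv.elim
    · exact (edge_env_iff M D).mpr ⟨T.1 xh, T.2 xh, rfl⟩
  · simp only [envOf, Kof, lookupO_kupdate_of_not_explored hK,
      lookupO_kupdate_of_not_explored hK']

variable {M D} [Inhabited Q]

def revealedPattern (σe : Vtx X Q → Vtx X Q) (x : X) : Finset X :=
  lookupO (Kof (σe (.env x default [] x))) x

theorem revealedPattern_mem {σe : Vtx X Q → Vtx X Q} (hσ : σe ∈ SE M D) (x : X) :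
    revealedPattern σe x ∈ M.Δ x := by
  obtain ⟨o, ho, hv⟩ := (edge_env_iff M D).mp (hσ.1 (.env x default [] x) trivial)
  rwa [revealedPattern, hv, Kof, lookupO_kupdate_of_not_explored not_explored_nil]

theorem apply_env_of_mem_SE {σe : Vtx X Q → Vtx X Q} (hσ : σe ∈ SE M D)
    (xe : X) (qe : Q) (Ke : List (X × Finset X)) (xh : X) :
    σe (.env xe qe Ke xh) =
      .ag xh (D.f qe (M.L xe)) (kupdate Ke (xh, revealedPattern σe xh)) := by
  obtain ⟨o, -, hv⟩ := (edge_env_iff M D).mp (hσ.1 (.env xe qe Ke xh) trivial)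
  rw [hv]
  by_cases hK : Explored Ke xh
  · rw [kupdate_of_explored hK, kupdate_of_explored hK]
  · have hconsistent := hσ.2 xe qe Ke xh default [] xh hK not_explored_nil
    rw [hv, Kof, lookupO_kupdate_of_not_explored hK] at hconsistent
    rw [hconsistent, revealedPattern]

end Arena

variable {X Q AP : Type} [DecidableEq X] [Fintype X] [Fintype Q] [Fintype AP]
  [Inhabited X] [Inhabited Q]

variable (M : PKWTS X AP) (D : DFAut Q AP)

theorem env_strategies_are_environments :
    (∀ T : CompatEnv M, envOf M D T ∈ SE M D) ∧
    ∀ σe ∈ SE M D, ∃ T : CompatEnv M,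
      ∀ v : Vtx X Q, IsEnvV v → σe v = envOf M D T v := by
  refine ⟨envOf_mem_SE M D, fun σe hσ => ⟨⟨revealedPattern σe, revealedPattern_mem hσ⟩, ?_⟩⟩
  rintro (_ | ⟨xe, qe, Ke, xh⟩) hv
  · exact hv.elim
  · exact apply_env_of_mem_SE hσ xe qe Ke xh

end RegretLTL
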